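/- arXiv:2202.10214 — 3 statements merged into one kernel-verified Lean document; each statement's English description precedes it below -/
import Mathlib

section
/- Let x be a higher-order type in which each label occurs at most once and let S ⊆ out(x). If b ∈ D(x) is all-ones on S, then for every function t : σ → Bool the bit assignment b′ defined by b′ i = t i for i ∈ S and b′ i = b i otherwise also belongs to D(x). -/
/-- Higher-order types over a type `σ` of elementary labels. -/
inductive Ty (σ : Type) : Type where
  | elem : σ → Ty σ
  | arrow : Ty σ → Ty σ → Ty σ

namespace Ty

variable {σ : Type} [DecidableEq σ]

/-- The labels occurring in a type. -/
def leaves : Ty σ → Finset σ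
  | elem A => {A}
  | arrow x y => leaves x ∪ leaves y

/-- Every label occurs at most once. -/
def NoDup : Ty σ → Prop
  | elem _ => True
  | arrow x y => NoDup x ∧ NoDup y ∧ Disjoint x.leaves y.leaves

/-- The pair (input labels, output labels) of a type. -/
def inOut : Ty σ → Finset σ × Finset σ
  | elem A => (∅, {A})
  | arrow x y => ((inOut x).2 ∪ (inOut y).1, (inOut x).1 ∪ (inOut y).2)

/-- Input labels. -/
def ins (x : Ty σ) : Finset σ := (inOut x).1

/-- Output labels. -/
def outs (x : Ty σ) : Finset σ := (inOut x).2

/-- A bit assignment `b` is all-ones on a finite set `S` of labels. -/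
def AllOnes (b : σ → Bool) (S : Finset σ) : Prop := ∀ i ∈ S, b i = true

/-- The set `D(x)` of bit assignments of a type. -/
def D : Ty σ → Set (σ → Bool)
  | elem A => {b | b A = false}
  | arrow x y => {b | b ∈ D y} ∪ {b | b ∉ D x ∧ ¬ AllOnes b x.leaves ∧ b ∉ D y}

/-- The immediate subterm relation. -/
inductive ImmSub : Ty σ → Ty σ → Prop
  | left (x z : Ty σ) : ImmSub x (arrow x z)
  | right (x z : Ty σ) : ImmSub x (arrow z x)

/-- Subterms: reflexive-transitive closure of the immediate subterm relation. -/
def Subterm {σ : Type} : Ty σ → Ty σ → Prop := Relation.ReflTransGen ImmSub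

/-- The critical set `S(x,A,B)`. -/
def Sset (x : Ty σ) (A B : σ) : Set (σ → Bool) :=
  {b | b A = false ∧ b B = false ∧ AllOnes b (x.outs \ {B})}

/-- `x` is no-signalling from `A` to `B`. -/
def NoSig (x : Ty σ) (A B : σ) : Prop := D x ∩ Sset x A B = ∅

/-- `x` is full-signalling from `A` to `B`. -/
def FullSig (x : Ty σ) (A B : σ) : Prop :=
  ¬ ∃ b : σ → Bool, ¬ AllOnes b x.leaves ∧ b ∉ D x ∧ b A = false ∧ b B = false ∧
    AllOnes b (x.ins \ {A})

/-- A pairing on `x`: a finite set of pairs (input label, output label) with all first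
components distinct and all second components distinct. -/
def IsPairing (x : Ty σ) (H : Finset (σ × σ)) : Prop :=
  (∀ p ∈ H, p.1 ∈ x.ins ∧ p.2 ∈ x.outs) ∧
  (∀ p ∈ H, ∀ q ∈ H, p.1 = q.1 → p = q) ∧
  (∀ p ∈ H, ∀ q ∈ H, p.2 = q.2 → p = q)

/-- The critical set `S(x,H)` for a pairing `H`. -/
def SsetH (x : Ty σ) (H : Finset (σ × σ)) : Set (σ → Bool) :=
  {b | AllOnes b (x.outs \ H.image Prod.snd) ∧ (∀ p ∈ H, b p.1 = b p.2) ∧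
    ∃ p ∈ H, b p.1 = false}

/-- The set `D(x ⊗ y)` for the tensor of two types with disjoint leaves. -/
def Dtensor (x y : Ty σ) : Set (σ → Bool) :=
  {b | b ∈ D x ∧ AllOnes b y.leaves} ∪ {b | b ∈ D y ∧ AllOnes b x.leaves} ∪ (D x ∩ D y)

/-- No-signalling from `A` to `B` for given data (set of bit assignments, output labels). -/
def NoSigData (D0 : Set (σ → Bool)) (outs0 : Finset σ) (A B : σ) : Prop :=
  D0 ∩ {b | b A = false ∧ b B = false ∧ AllOnes b (outs0 \ {B})} = ∅

/-- Full-signalling from `A` to `B` for given data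
(set of bit assignments, leaves, input labels). -/
def FullSigData (D0 : Set (σ → Bool)) (leaves0 ins0 : Finset σ) (A B : σ) : Prop :=
  ¬ ∃ b : σ → Bool, ¬ AllOnes b leaves0 ∧ b ∉ D0 ∧ b A = false ∧ b B = false ∧
    AllOnes b (ins0 \ {A})

end Ty

section Aux
open Ty
variable {σ : Type} [DecidableEq σ]

lemma ins_elem (A : σ) : (Ty.elem A).ins = ∅ := rfl
lemma outs_elem (A : σ) : (Ty.elem A).outs = {A} := rfl
lemma ins_arrow (x y : Ty σ) : (Ty.arrow x y).ins = x.outs ∪ y.ins := rfl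
lemma outs_arrow (x y : Ty σ) : (Ty.arrow x y).outs = x.ins ∪ y.outs := rfl

lemma ins_outs_sub_leaves (x : Ty σ) : x.ins ⊆ x.leaves ∧ x.outs ⊆ x.leaves := by
  induction x with
  | elem A => constructor <;> simp [ins_elem, outs_elem, leaves]
  | arrow x y ihx ihy =>
    rw [ins_arrow, outs_arrow]
    simp only [leaves]
    exact ⟨Finset.union_subset (ihx.2.trans Finset.subset_union_left)
        (ihy.1.trans Finset.subset_union_right),
      Finset.union_subset (ihx.1.trans Finset.subset_union_left)
        (ihy.2.trans Finset.subset_union_right)⟩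

lemma allOnes_ext {b b' : σ → Bool} {S : Finset σ} (h : ∀ i ∈ S, b i = b' i) :
    AllOnes b S ↔ AllOnes b' S := by
  unfold AllOnes; constructor <;> intro H i hi
  · rw [← h i hi]; exact H i hi
  · rw [h i hi]; exact H i hi

lemma D_ext (x : Ty σ) {b b' : σ → Bool} (h : ∀ i ∈ x.leaves, b i = b' i) :
    b ∈ D x ↔ b' ∈ D x := by
  induction x with
  | elem A =>
    simp only [D, Set.mem_setOf_eq]
    rw [h A (by simp [leaves])]
  | arrow x y ihx ihy =>
    have hx : ∀ i ∈ x.leaves, b i = b' i := fun i hi => h i (by simp [leaves, hi])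
    have hy : ∀ i ∈ y.leaves, b i = b' i := fun i hi => h i (by simp [leaves, hi])
    simp only [D, Set.mem_union, Set.mem_setOf_eq]
    rw [ihx hx, ihy hy, allOnes_ext hx]

lemma allOnes_not_D (x : Ty σ) {b : σ → Bool} (h : AllOnes b x.leaves) : b ∉ D x := by
  induction x with
  | elem A =>
    simp only [D, Set.mem_setOf_eq]
    simp [h A (by simp [leaves])]
  | arrow x y ihx ihy =>
    have hx : AllOnes b x.leaves := fun i hi => h i (by simp [leaves, hi])
    have hy : AllOnes b y.leaves := fun i hi => h i (by simp [leaves, hi])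
    simp only [D, Set.mem_union, Set.mem_setOf_eq]
    push_neg
    exact ⟨ihy hy, by tauto⟩

lemma key_lemma (x : Ty σ) (hx : x.NoDup) :
    (∀ S : Finset σ, S ⊆ x.outs → ∀ b ∈ D x, AllOnes b S → ∀ t : σ → Bool,
      (fun i => if i ∈ S then t i else b i) ∈ D x) ∧
    (∀ S : Finset σ, S ⊆ x.ins → ∀ b ∉ D x, AllOnes b S → ∀ t : σ → Bool,
      (fun i => if i ∈ S then t i else b i) ∉ D x) ∧
    (∀ S : Finset σ, S ⊆ x.outs → ∀ b : σ → Bool, AllOnes b x.leaves → ∀ t : σ → Bool,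
      (fun i => if i ∈ S then t i else b i) ∈ D x ∨
        AllOnes (fun i => if i ∈ S then t i else b i) x.leaves) := by
  induction x with
  | elem A =>
    refine ⟨?_, ?_, ?_⟩
    · intro S hS b hb hones t
      have hA : A ∉ S := by
        intro h
        have := hones A h
        simp only [D, Set.mem_setOf_eq] at hb
        rw [hb] at this; exact absurd this (by simp)
      simpa only [D, Set.mem_setOf_eq, if_neg hA] using hb
    · intro S hS b hb hones t
      have hA : A ∉ S := fun h => by
        have := hS h
        rw [ins_elem] at this
        simp at this
      simpa only [D, Set.mem_setOf_eq, if_neg hA] using hb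
    · intro S hS b hones t
      by_cases h : (if A ∈ S then t A else b A) = false
      · left; simpa only [D, Set.mem_setOf_eq] using h
      · right; intro i hi
        simp only [leaves, Finset.mem_singleton] at hi
        subst hi
        simpa using h
  | arrow x y ihx ihy =>
    obtain ⟨hnx, hny, hdisj⟩ := hx
    obtain ⟨Px, Qx, Rx⟩ := ihx hnx
    obtain ⟨Py, Qy, Ry⟩ := ihy hny
    have hlx := ins_outs_sub_leaves x
    have hly := ins_outs_sub_leaves y
    -- agreement facts
    have agree : ∀ (S : Finset σ) (b t : σ → Bool) (L : Finset σ),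
        ∀ i ∈ L, (fun i => if i ∈ S then t i else b i) i
          = (fun i => if i ∈ S ∩ L then t i else b i) i := by
      intro S b t L i hi
      simp only [Finset.mem_inter]
      by_cases h : i ∈ S <;> simp [h, hi]
    refine ⟨?_, ?_, ?_⟩
    · -- P
      intro S hS b hb hones t
      rw [outs_arrow] at hS
      have hSx : S ∩ x.leaves ⊆ x.ins := by
        intro i hi
        rw [Finset.mem_inter] at hi
        rcases Finset.mem_union.mp (hS hi.1) with h | h
        · exact h
        · exact absurd hi.2 (Finset.disjoint_right.mp hdisj (hly.2 h))
      have hSy : S ∩ y.leaves ⊆ y.outs := by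
        intro i hi
        rw [Finset.mem_inter] at hi
        rcases Finset.mem_union.mp (hS hi.1) with h | h
        · exact absurd hi.2 (Finset.disjoint_left.mp hdisj (hlx.1 h))
        · exact h
      have honesx : AllOnes b (S ∩ x.leaves) := fun i hi => hones i (Finset.mem_inter.mp hi).1
      have honesy : AllOnes b (S ∩ y.leaves) := fun i hi => hones i (Finset.mem_inter.mp hi).1
      simp only [D, Set.mem_union, Set.mem_setOf_eq] at hb ⊢
      rcases hb with hb | ⟨hb1, hb2, hb3⟩
      · left
        rw [D_ext y (agree S b t y.leaves)]
        exact Py _ hSy b hb honesy t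
      · have hbx' : (fun i => if i ∈ S then t i else b i) ∉ D x := by
          rw [D_ext x (agree S b t x.leaves)]
          exact Qx _ hSx b hb1 honesx t
        have hnall : ¬ AllOnes (fun i => if i ∈ S then t i else b i) x.leaves := by
          intro H
          apply hb2
          intro i hi
          have hiS : i ∉ S ∨ b i = true := by
            by_cases h : i ∈ S
            · right; exact hones i h
            · left; exact h
          rcases hiS with h | h
          · have := H i hi; simpa [h] using this
          · exact h
        by_cases hy' : (fun i => if i ∈ S then t i else b i) ∈ D y
        · left; exact hy'
        · right; exact ⟨hbx', hnall, hy'⟩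
    · -- Q
      intro S hS b hb hones t
      rw [ins_arrow] at hS
      have hSx : S ∩ x.leaves ⊆ x.outs := by
        intro i hi
        rw [Finset.mem_inter] at hi
        rcases Finset.mem_union.mp (hS hi.1) with h | h
        · exact h
        · exact absurd hi.2 (Finset.disjoint_right.mp hdisj (hly.1 h))
      have hSy : S ∩ y.leaves ⊆ y.ins := by
        intro i hi
        rw [Finset.mem_inter] at hi
        rcases Finset.mem_union.mp (hS hi.1) with h | h
        · exact absurd hi.2 (Finset.disjoint_left.mp hdisj (hlx.2 h))
        · exact h
      have honesx : AllOnes b (S ∩ x.leaves) := fun i hi => hones i (Finset.mem_inter.mp hi).1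
      have honesy : AllOnes b (S ∩ y.leaves) := fun i hi => hones i (Finset.mem_inter.mp hi).1
      simp only [D, Set.mem_union, Set.mem_setOf_eq] at hb
      push_neg at hb
      obtain ⟨hby, hb2⟩ := hb
      have hby' : (fun i => if i ∈ S then t i else b i) ∉ D y := by
        rw [D_ext y (agree S b t y.leaves)]
        exact Qy _ hSy b hby honesy t
      have hx' : (fun i => if i ∈ S then t i else b i) ∈ D x ∨
          AllOnes (fun i => if i ∈ S then t i else b i) x.leaves := by
        by_cases hbx : b ∈ D x
        · left
          rw [D_ext x (agree S b t x.leaves)]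
          exact Px _ hSx b hbx honesx t
        · have hall : AllOnes b x.leaves := by
            by_contra hna
            exact hby' (absurd (hb2 hbx hna) (by simp [hby]))
          rcases Rx _ hSx b hall t with h | h
          · left; rw [D_ext x (agree S b t x.leaves)]; exact h
          · right; rw [allOnes_ext (agree S b t x.leaves)]; exact h
      simp only [D, Set.mem_union, Set.mem_setOf_eq]
      push_neg
      exact ⟨hby', by tauto⟩
    · -- R
      intro S hS b hall t
      rw [outs_arrow] at hS
      have hSx : S ∩ x.leaves ⊆ x.ins := by
        intro i hi
        rw [Finset.mem_inter] at hi
        rcases Finset.mem_union.mp (hS hi.1) with h | h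
        · exact h
        · exact absurd hi.2 (Finset.disjoint_right.mp hdisj (hly.2 h))
      have hSy : S ∩ y.leaves ⊆ y.outs := by
        intro i hi
        rw [Finset.mem_inter] at hi
        rcases Finset.mem_union.mp (hS hi.1) with h | h
        · exact absurd hi.2 (Finset.disjoint_left.mp hdisj (hlx.1 h))
        · exact h
      have hallx : AllOnes b x.leaves := fun i hi => hall i (by simp [leaves, hi])
      have hally : AllOnes b y.leaves := fun i hi => hall i (by simp [leaves, hi])
      have honesx : AllOnes b (S ∩ x.leaves) := fun i hi =>
        hallx i (Finset.mem_inter.mp hi).2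
      have honesy : AllOnes b (S ∩ y.leaves) := fun i hi =>
        hally i (Finset.mem_inter.mp hi).2
      have hbx' : (fun i => if i ∈ S then t i else b i) ∉ D x := by
        rw [D_ext x (agree S b t x.leaves)]
        exact Qx _ hSx b (allOnes_not_D x hallx) honesx t
      simp only [D, Set.mem_union, Set.mem_setOf_eq]
      rcases Ry _ hSy b hally t with h | h
      · left; left
        rw [D_ext y (agree S b t y.leaves)]
        exact h
      · have hally' : AllOnes (fun i => if i ∈ S then t i else b i) y.leaves := by
          rw [allOnes_ext (agree S b t y.leaves)]; exact h
        by_cases hax : AllOnes (fun i => if i ∈ S then t i else b i) x.leaves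
        · right
          intro i hi
          simp only [leaves, Finset.mem_union] at hi
          rcases hi with hi | hi
          · exact hax i hi
          · exact hally' i hi
        · left; right
          exact ⟨hbx', hax, allOnes_not_D y hally'⟩

open Ty in
theorem stmt7' {σ : Type} [DecidableEq σ] (x : Ty σ) (hx : x.NoDup)
    (S : Finset σ) (hS : S ⊆ x.outs) (b : σ → Bool) (hb : b ∈ D x)
    (hones : AllOnes b S) (t : σ → Bool) :
    (fun i => if i ∈ S then t i else b i) ∈ D x :=
  (key_lemma x hx).1 S hS b hb hones t
end Aux

open Ty in
/-- if an element of `D(x)` is all-ones on a set `S` of output labels,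
then changing its values on `S` arbitrarily stays in `D(x)`. -/
theorem stmt7 {σ : Type} [DecidableEq σ] (x : Ty σ) (hx : x.NoDup)
    (S : Finset σ) (hS : S ⊆ x.outs) (b : σ → Bool) (hb : b ∈ D x)
    (hones : AllOnes b S) (t : σ → Bool) :
    (fun i => if i ∈ S then t i else b i) ∈ D x :=
  stmt7' x hx S hS b hb hones t
end

section
/- Let x be a higher-order type in which each label occurs at most once, and let H ⊆ K be two pairings on x. If D(x) ∩ S(x,H) ≠ ∅ then D(x) ∩ S(x,K) ≠ ∅. (Equivalently: if the set of contractions H is not admissible, then no larger set of contractions K is admissible.) -/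
namespace Ty

variable {σ : Type} [DecidableEq σ]

@[simp] lemma ins_elem (A : σ) : (elem A).ins = ∅ := rfl
@[simp] lemma outs_elem (A : σ) : (elem A).outs = {A} := rfl
@[simp] lemma ins_arrow (x y : Ty σ) : (arrow x y).ins = x.outs ∪ y.ins := rfl
@[simp] lemma outs_arrow (x y : Ty σ) : (arrow x y).outs = x.ins ∪ y.outs := rfl

lemma ins_union_outs (x : Ty σ) : x.ins ∪ x.outs = x.leaves := by
  induction x with
  | elem A => simp [leaves]
  | arrow x y ihx ihy =>
    simp only [ins_arrow, outs_arrow, leaves, ← ihx, ← ihy]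
    ac_rfl

lemma ins_subset_leaves (x : Ty σ) : x.ins ⊆ x.leaves := by
  rw [← ins_union_outs]; exact Finset.subset_union_left

lemma outs_subset_leaves (x : Ty σ) : x.outs ⊆ x.leaves := by
  rw [← ins_union_outs]; exact Finset.subset_union_right

lemma disj_ins_outs (x : Ty σ) (hx : x.NoDup) : Disjoint x.ins x.outs := by
  induction x with
  | elem A => simp
  | arrow x y ihx ihy =>
    obtain ⟨h1, h2, h3⟩ := hx
    simp only [ins_arrow, outs_arrow, Finset.disjoint_union_left, Finset.disjoint_union_right]
    have d1 : Disjoint x.outs x.ins := (ihx h1).symm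
    have d2 : Disjoint x.outs y.outs := h3.mono (outs_subset_leaves x) (outs_subset_leaves y)
    have d3 : Disjoint y.ins x.ins := (h3.mono (ins_subset_leaves x) (ins_subset_leaves y)).symm
    have d4 : Disjoint y.ins y.outs := ihy h2
    tauto

/-- Key structural lemma: (M) if `b ∉ D x` and `b` is all-ones on inputs then it is all-ones
on outputs; (N) if `b ∈ D x` then `b` is not all-ones on outputs. -/
lemma MN (x : Ty σ) (hx : x.NoDup) (b : σ → Bool) :
    (b ∉ D x → AllOnes b x.ins → AllOnes b x.outs) ∧ (b ∈ D x → ¬ AllOnes b x.outs) := by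
  induction x with
  | elem A =>
    constructor
    · intro hb _ i hi
      simp only [outs_elem, Finset.mem_singleton] at hi; subst hi
      simpa [D] using hb
    · intro hb hall
      have := hall A (by simp)
      simp [D] at hb; simp [hb] at this
  | arrow x y ihx ihy =>
    obtain ⟨h1, h2, _⟩ := hx
    obtain ⟨Mx, Nx⟩ := ihx h1
    obtain ⟨My, Ny⟩ := ihy h2
    constructor
    · intro hb hall
      simp only [D, Set.mem_union, Set.mem_setOf_eq, not_or, not_and_or, not_not] at hb
      obtain ⟨hby, hb2⟩ := hb
      have hinsx : AllOnes b x.outs := fun i hi => hall i (by simp [hi])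
      have hinsy : AllOnes b y.ins := fun i hi => hall i (by simp [hi])
      have houty : AllOnes b y.outs := My hby hinsy
      have hinx : AllOnes b x.ins := by
        rcases hb2 with hx' | hx' | hx'
        · exact absurd hinsx (Nx hx')
        · intro i hi
          exact hx' i (ins_subset_leaves x hi)
        · exact absurd hx' hby
      intro i hi
      simp only [outs_arrow, Finset.mem_union] at hi
      rcases hi with hi | hi
      · exact hinx i hi
      · exact houty i hi
    · intro hb hall
      have houty : ¬ AllOnes b x.ins ∨ True := Or.inr trivial
      rcases hb with hb | ⟨hbx, hblx, _⟩
      · exact Ny hb (fun i hi => hall i (by simp [hi]))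
      · have hinx : AllOnes b x.ins := fun i hi => hall i (by simp [hi])
        have := Mx hbx hinx
        apply hblx
        intro i hi
        rw [← ins_union_outs] at hi
        rcases Finset.mem_union.mp hi with hi | hi
        · exact hinx i hi
        · exact this i hi

/-- Key monotonicity lemma: raising inputs to `true` preserves membership in `D`;
raising outputs to `true` preserves non-membership. -/
lemma InOut (x : Ty σ) (hx : x.NoDup) :
    (∀ b b' : σ → Bool, (∀ i ∈ x.leaves, b' i = b i ∨ (i ∈ x.ins ∧ b' i = true)) →
      b ∈ D x → b' ∈ D x) ∧
    (∀ b b' : σ → Bool, (∀ i ∈ x.leaves, b' i = b i ∨ (i ∈ x.outs ∧ b' i = true)) →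
      b ∉ D x → b' ∉ D x) := by
  induction x with
  | elem A =>
    constructor
    · intro b b' hbb hb
      rcases hbb A (by simp [leaves]) with h | h
      · simpa [D, h] using hb
      · simp at h
    · intro b b' hbb hb
      simp only [D, Set.mem_setOf_eq] at hb ⊢
      rcases hbb A (by simp [leaves]) with h | h
      · simp [h, hb]
      · simp [h.2]
  | arrow x y ihx ihy =>
    obtain ⟨h1, h2, h3⟩ := hx
    obtain ⟨Ix, Ox⟩ := ihx h1
    obtain ⟨Iy, Oy⟩ := ihy h2
    have hdisj : ∀ i ∈ y.leaves, i ∉ x.leaves := fun i hi hx' =>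
      (Finset.disjoint_left.mp h3) hx' hi
    constructor
    · -- raising inputs, preserve membership
      intro b b' hbb hb
      have hy' : ∀ i ∈ y.leaves, b' i = b i ∨ (i ∈ y.ins ∧ b' i = true) := by
        intro i hi
        rcases hbb i (by simp [leaves, hi]) with h | ⟨hin, ht⟩
        · exact Or.inl h
        · simp only [ins_arrow, Finset.mem_union] at hin
          rcases hin with hin | hin
          · exact absurd (outs_subset_leaves x hin) (hdisj i hi)
          · exact Or.inr ⟨hin, ht⟩
      have hx' : ∀ i ∈ x.leaves, b' i = b i ∨ (i ∈ x.outs ∧ b' i = true) := by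
        intro i hi
        rcases hbb i (by simp [leaves, hi]) with h | ⟨hin, ht⟩
        · exact Or.inl h
        · simp only [ins_arrow, Finset.mem_union] at hin
          rcases hin with hin | hin
          · exact Or.inr ⟨hin, ht⟩
          · exact absurd hi (hdisj i (ins_subset_leaves y hin))
      rcases hb with hb | ⟨hbx, hblx, hby⟩
      · exact Or.inl (Iy b b' hy' hb)
      · by_cases hb'y : b' ∈ D y
        · exact Or.inl hb'y
        · refine Or.inr ⟨Ox b b' hx' hbx, ?_, hb'y⟩
          intro hall
          -- then b is all-ones on x.ins, b ∉ D x, so by M all-ones on x.outs, contra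
          have hbins : AllOnes b x.ins := by
            intro i hi
            rcases hx' i (ins_subset_leaves x hi) with h | ⟨ho, _⟩
            · rw [← h]; exact hall i (ins_subset_leaves x hi)
            · exact absurd ho (Finset.disjoint_left.mp (disj_ins_outs x h1) hi)
          have hbouts := (MN x h1 b).1 hbx hbins
          apply hblx
          intro i hi
          rw [← ins_union_outs] at hi
          rcases Finset.mem_union.mp hi with hi | hi
          · exact hbins i hi
          · exact hbouts i hi
    · -- raising outputs, preserve non-membership
      intro b b' hbb hb
      have hy' : ∀ i ∈ y.leaves, b' i = b i ∨ (i ∈ y.outs ∧ b' i = true) := by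
        intro i hi
        rcases hbb i (by simp [leaves, hi]) with h | ⟨hin, ht⟩
        · exact Or.inl h
        · simp only [outs_arrow, Finset.mem_union] at hin
          rcases hin with hin | hin
          · exact absurd (ins_subset_leaves x hin) (hdisj i hi)
          · exact Or.inr ⟨hin, ht⟩
      have hx' : ∀ i ∈ x.leaves, b' i = b i ∨ (i ∈ x.ins ∧ b' i = true) := by
        intro i hi
        rcases hbb i (by simp [leaves, hi]) with h | ⟨hin, ht⟩
        · exact Or.inl h
        · simp only [outs_arrow, Finset.mem_union] at hin
          rcases hin with hin | hin
          · exact Or.inr ⟨hin, ht⟩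
          · exact absurd hi (hdisj i (outs_subset_leaves y hin))
      simp only [D, Set.mem_union, Set.mem_setOf_eq, not_or, not_and_or, not_not] at hb ⊢
      obtain ⟨hby, hb2⟩ := hb
      have hb'y := Oy b b' hy' hby
      refine ⟨hb'y, ?_⟩
      rcases hb2 with hbx | hblx | hbx
      · exact Or.inl (Ix b b' hx' hbx)
      · refine Or.inr (Or.inl ?_)
        intro i hi
        rcases hx' i hi with h | ⟨_, ht⟩
        · rw [h]; exact hblx i hi
        · exact ht
      · exact absurd hbx hby

end Ty


open Ty in
/-- if a set of contractions `H` is not admissible, then no larger set of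
contractions `K ⊇ H` is admissible. -/
theorem stmt9 {σ : Type} [DecidableEq σ] (x : Ty σ) (hx : x.NoDup)
    (H K : Finset (σ × σ)) (hH : IsPairing x H) (hK : IsPairing x K) (hHK : H ⊆ K)
    (h : D x ∩ SsetH x H ≠ ∅) : D x ∩ SsetH x K ≠ ∅ := by
  rw [← Set.nonempty_iff_ne_empty] at h ⊢
  obtain ⟨b, hbD, hall, heq, p0, hp0H, hp0f⟩ := h
  set T : Finset σ := (K \ H).image Prod.fst with hT
  set b' : σ → Bool := fun i => if i ∈ T then true else b i with hb'
  have hTins : ∀ i ∈ T, i ∈ x.ins := by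
    intro i hi
    obtain ⟨q, hq, rfl⟩ := Finset.mem_image.mp hi
    exact (hK.1 q (Finset.mem_sdiff.mp hq).1).1
  have hdisj := disj_ins_outs x hx
  have houtT : ∀ i ∈ x.outs, i ∉ T := fun i hi hiT =>
    Finset.disjoint_left.mp hdisj (hTins i hiT) hi
  -- first components of pairs in H are not in T
  have hfstT : ∀ p ∈ H, p.1 ∉ T := by
    intro p hp hpT
    obtain ⟨q, hq, hq1⟩ := Finset.mem_image.mp hpT
    obtain ⟨hqK, hqH⟩ := Finset.mem_sdiff.mp hq
    exact hqH (hK.2.1 q hqK p (hHK hp) hq1 ▸ hp)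
  -- second components of pairs in K \ H are not matched in H
  have hsndH : ∀ p ∈ K, p ∉ H → p.2 ∉ H.image Prod.snd := by
    intro p hpK hpH hmem
    obtain ⟨q, hq, hq2⟩ := Finset.mem_image.mp hmem
    exact hpH (hK.2.2 p hpK q (hHK hq) hq2.symm ▸ hq)
  refine ⟨b', ?_, ?_, ?_, p0, hHK hp0H, ?_⟩
  · -- b' ∈ D x
    refine (InOut x hx).1 b b' ?_ hbD
    intro i _
    by_cases hi : i ∈ T
    · exact Or.inr ⟨hTins i hi, by simp [hb', hi]⟩
    · exact Or.inl (by simp [hb', hi])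
  · -- all-ones on outs \ K.snd
    intro i hi
    obtain ⟨hiout, hiK⟩ := Finset.mem_sdiff.mp hi
    have hiH : i ∉ H.image Prod.snd := fun hmem =>
      hiK (Finset.image_subset_image hHK hmem)
    have := hall i (Finset.mem_sdiff.mpr ⟨hiout, hiH⟩)
    simpa [hb', houtT i hiout] using this
  · -- b' p.1 = b' p.2 for p ∈ K
    intro p hp
    by_cases hpH : p ∈ H
    · have h1 := hfstT p hpH
      have h2 := houtT p.2 (hH.1 p hpH).2
      simpa [hb', h1, h2] using heq p hpH
    · have h1 : p.1 ∈ T := Finset.mem_image.mpr ⟨p, Finset.mem_sdiff.mpr ⟨hp, hpH⟩, rfl⟩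
      have h2 : p.2 ∉ T := houtT p.2 (hK.1 p hp).2
      have h3 : b p.2 = true :=
        hall p.2 (Finset.mem_sdiff.mpr ⟨(hK.1 p hp).2, hsndH p hp hpH⟩)
      simp [hb', h1, h2, h3]
  · -- witness of falseness
    simpa [hb', hfstT p0 hp0H] using hp0f
end

section
/- Let x and y be higher-order types with disjoint leaf sets, each label occurring at most once, and let A ∈ in(x), B ∈ out(x). Then x is no-signalling from A to B if and only if the tensor x ⊗ y is no-signalling from A to B. -/
namespace Ty

variable {σ : Type} [DecidableEq σ]

lemma insOuts_subset_leaves (x : Ty σ) : x.ins ⊆ x.leaves ∧ x.outs ⊆ x.leaves := by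
  induction x with
  | elem A => simp [Ty.ins, Ty.outs, Ty.inOut, Ty.leaves]
  | arrow u v ihu ihv =>
    obtain ⟨hu1, hu2⟩ := ihu
    obtain ⟨hv1, hv2⟩ := ihv
    constructor <;> intro i hi <;>
      simp only [Ty.ins, Ty.outs, Ty.inOut, Ty.leaves, Finset.mem_union] at hi ⊢ <;>
      rcases hi with h | h
    · exact Or.inl (hu2 h)
    · exact Or.inr (hv1 h)
    · exact Or.inl (hu1 h)
    · exact Or.inr (hv2 h)

lemma D_congr (x : Ty σ) {b b' : σ → Bool} (h : ∀ i ∈ x.leaves, b i = b' i) :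
    b ∈ D x ↔ b' ∈ D x := by
  induction x with
  | elem A =>
    have := h A (by simp [Ty.leaves])
    simp [Ty.D, this]
  | arrow u v ihu ihv =>
    have hu : ∀ i ∈ u.leaves, b i = b' i := fun i hi =>
      h i (by simp [Ty.leaves, hi])
    have hv : ∀ i ∈ v.leaves, b i = b' i := fun i hi =>
      h i (by simp [Ty.leaves, hi])
    have hall : AllOnes b u.leaves ↔ AllOnes b' u.leaves := by
      constructor <;> intro ha i hi
      · rw [← hu i hi]; exact ha i hi
      · rw [hu i hi]; exact ha i hi
    simp only [Ty.D, Set.mem_union, Set.mem_setOf_eq, ihu hu, ihv hv, hall]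

end Ty

open Ty in
/-- `x` is no-signalling from `A` to `B` iff `x ⊗ y` is. -/
theorem stmt10 {σ : Type} [DecidableEq σ] (x y : Ty σ) (hx : x.NoDup) (hy : y.NoDup)
    (hdisj : Disjoint x.leaves y.leaves) (A B : σ) (hA : A ∈ x.ins) (hB : B ∈ x.outs) :
    NoSig x A B ↔ NoSigData (Dtensor x y) (x.outs ∪ y.outs) A B := by
  have hxl := insOuts_subset_leaves x
  have hyl := insOuts_subset_leaves y
  have hBx : B ∈ x.leaves := hxl.2 hB
  have hAx : A ∈ x.leaves := hxl.1 hA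
  constructor
  · intro hns
    rw [NoSigData, Set.eq_empty_iff_forall_notMem]
    rintro b ⟨hbD, hbA, hbB, hbOnes⟩
    have hSx : b ∈ Sset x A B := by
      refine ⟨hbA, hbB, fun i hi => ?_⟩
      apply hbOnes
      simp only [Finset.mem_sdiff, Finset.mem_union, Finset.mem_singleton] at hi ⊢
      exact ⟨Or.inl hi.1, hi.2⟩
    have hbx : b ∈ D x := by
      rcases hbD with (⟨h1, _⟩ | ⟨_, hones⟩) | ⟨h1, _⟩
      · exact h1
      · exact absurd (hones A hAx) (by simp [hbA])
      · exact h1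
    exact Set.eq_empty_iff_forall_notMem.mp hns b ⟨hbx, hSx⟩
  · intro hns
    rw [NoSig, Set.eq_empty_iff_forall_notMem]
    rintro b ⟨hbx, hbA, hbB, hbOnes⟩
    set b' : σ → Bool := fun i => if i ∈ x.leaves then b i else true with hb'
    have hagree : ∀ i ∈ x.leaves, b i = b' i := by
      intro i hi; simp [hb', hi]
    have hb'x : b' ∈ D x := (D_congr x hagree).mp hbx
    have hb'y : AllOnes b' y.leaves := by
      intro i hi
      have : i ∉ x.leaves := fun hix => (Finset.disjoint_left.mp hdisj hix) hi
      simp [hb', this]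
    have hb'A : b' A = false := by rw [← hagree A hAx]; exact hbA
    have hb'B : b' B = false := by rw [← hagree B hBx]; exact hbB
    apply Set.eq_empty_iff_forall_notMem.mp hns b'
    refine ⟨Or.inl (Or.inl ⟨hb'x, hb'y⟩), hb'A, hb'B, fun i hi => ?_⟩
    simp only [Finset.mem_sdiff, Finset.mem_union, Finset.mem_singleton] at hi
    rcases hi.1 with h | h
    · rw [← hagree i (hxl.2 h)]
      exact hbOnes i (by simp [Finset.mem_sdiff, h, hi.2])
    · exact hb'y i (hyl.2 h)
end
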